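/- Under the exchangeable Gaussian model with common correlation ρ ∈ (0,1), the truncated estimator ρ̂ = (1 - s_n^2)·I(s_n^2 < 1) converges in probability to ρ as n → ∞. -/

import Mathlib

open MeasureTheory ProbabilityTheory Real Filter

/-- Unbiased sample variance of an `n`-tuple of reals. -/
noncomputable def sampleVar (n : ℕ) (x : Fin n → ℝ) : ℝ :=
  (1 / ((n : ℝ) - 1)) * ∑ i, (x i - (∑ j, x j) / n) ^ 2

/-- The exchangeable standard Gaussian model, given through its one-factor
representation: `X i = √ρ · Z 0 + √(1-ρ) · Z (i+1)` for `Z` i.i.d. `N(0,1)`,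
which yields a jointly normal vector with mean `0`, unit variances and
common pairwise correlation `ρ` (covariance `(1-ρ)·I + ρ·J`). -/
def IsEquicorrGaussian {Ω : Type*} [MeasureSpace Ω] (n : ℕ) (ρ : ℝ)
    (X : Fin n → Ω → ℝ) : Prop :=
  ∃ Z : ℕ → Ω → ℝ,
    iIndepFun Z ℙ ∧
    (∀ i, Measure.map (Z i) ℙ = gaussianReal 0 1) ∧
    (∀ i, Measurable (Z i)) ∧
    (∀ i ω, X i ω = Real.sqrt ρ * Z 0 ω + Real.sqrt (1 - ρ) * Z (i + 1) ω)

/-!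
Writing `X i = √ρ Z₀ + √(1-ρ) Wᵢ`, the common factor `Z₀` cancels in the sample variance, so
`s² = (1-ρ) · n/(n-1) · (mean of Wᵢ² - (mean of Wᵢ)²)` with `Wᵢ` i.i.d. `N(0,1)`. The
representation is chosen anew for every `n`, so no strong law applies; instead Chebyshev's
inequality gives a weak law for triangular arrays, and the two means tend in probability to `1`
and `0`. Since `ρ̂ = max (1 - s²) 0` is a continuous function of `n/(n-1)` and these means, it
tends in probability to `1 - (1-ρ) = ρ`.
-/

open scoped NNReal Topology

namespace MeasureTheory

variable {α ι E F : Type*} [MeasurableSpace α] {μ : Measure α} {l : Filter ι}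

theorem TendstoInMeasure.prodMk [PseudoMetricSpace E] [PseudoMetricSpace F]
    {f : ι → α → E} {g : ι → α → F} {f₀ : α → E} {g₀ : α → F}
    (hf : TendstoInMeasure μ f l f₀) (hg : TendstoInMeasure μ g l g₀) :
    TendstoInMeasure μ (fun i x => (f i x, g i x)) l fun x => (f₀ x, g₀ x) := by
  rw [tendstoInMeasure_iff_dist] at hf hg ⊢
  intro ε hε
  have hsum := (hf ε hε).add (hg ε hε)
  rw [add_zero] at hsum
  refine tendsto_of_tendsto_of_tendsto_of_le_of_le tendsto_const_nhds hsum (fun _ => zero_le)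
    fun i => (measure_mono fun x hx => ?_).trans (measure_union_le _ _)
  simpa only [Set.mem_ofPred_eq, Set.mem_union, Prod.dist_eq, le_max_iff] using hx

theorem TendstoInMeasure.comp_continuousAt_const [PseudoMetricSpace E] [PseudoMetricSpace F]
    {f : ι → α → E} {c : E} {φ : E → F} (hf : TendstoInMeasure μ f l fun _ => c)
    (hφ : ContinuousAt φ c) :
    TendstoInMeasure μ (fun i x => φ (f i x)) l fun _ => φ c := by
  rw [tendstoInMeasure_iff_dist] at hf ⊢
  intro ε hε
  obtain ⟨δ, hδ, hφδ⟩ := Metric.continuousAt_iff.mp hφ ε hε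
  refine tendsto_of_tendsto_of_tendsto_of_le_of_le tendsto_const_nhds (hf δ hδ) (fun _ => zero_le)
    fun i => measure_mono fun x hx => ?_
  by_contra hlt
  exact (not_le.mpr (hφδ (not_le.mp hlt))) hx

theorem tendstoInMeasure_const_of_tendsto [PseudoMetricSpace E] {c : ι → E} {c₀ : E}
    (hc : Tendsto c l (𝓝 c₀)) :
    TendstoInMeasure μ (fun i _ => c i) l fun _ => c₀ := by
  rw [tendstoInMeasure_iff_dist]
  intro ε hε
  refine tendsto_const_nhds.congr' ?_
  filter_upwards [Metric.tendsto_nhds.mp hc ε hε] with i hi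
  simp [not_le.mpr hi]

theorem MemLp.sq_of_memLp_four {f : α → ℝ} (hf : MemLp f 4 μ) : MemLp (fun x => f x ^ 2) 2 μ := by
  refine (memLp_two_iff_integrable_sq (hf.aestronglyMeasurable.pow 2)).mpr ?_
  refine (hf.integrable_norm_pow (p := 4) (by norm_num)).congr ?_
  filter_upwards with x
  rw [Real.norm_eq_abs, Pi.pow_apply, ← pow_mul, Even.pow_abs ⟨2, rfl⟩]

end MeasureTheory

namespace ProbabilityTheory

variable {Ω : Type*} [MeasurableSpace Ω] {μ : Measure Ω}

theorem variance_sum_le_of_pairwise_indepFun {ι : Type*} [Fintype ι] {Y : ι → Ω → ℝ} {v : ℝ}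
    (hL2 : ∀ i, MemLp (Y i) 2 μ) (hindep : Pairwise fun i j => IndepFun (Y i) (Y j) μ)
    (hvar : ∀ i, Var[Y i; μ] ≤ v) :
    Var[fun ω => ∑ i, Y i ω; μ] ≤ Fintype.card ι * v := by
  have hfun : (fun ω => ∑ i, Y i ω) = ∑ i, Y i := by ext; simp
  rw [hfun, IndepFun.variance_sum (fun i _ => hL2 i) fun i _ j _ hij => hindep hij]
  simpa using Finset.sum_le_sum fun i (_ : i ∈ Finset.univ) => hvar i

theorem measure_dist_average_ge_le [IsFiniteMeasure μ] {n : ℕ} (hn : n ≠ 0) {Y : Fin n → Ω → ℝ}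
    {m v ε : ℝ} (hε : 0 < ε) (hL2 : ∀ i, MemLp (Y i) 2 μ)
    (hindep : Pairwise fun i j => IndepFun (Y i) (Y j) μ)
    (hmean : ∀ i, μ[Y i] = m) (hvar : ∀ i, Var[Y i; μ] ≤ v) :
    μ {ω | ε ≤ dist ((∑ i, Y i ω) / n) m} ≤ ENNReal.ofReal (v / (n * ε ^ 2)) := by
  have hL2A : MemLp (fun ω => (∑ i, Y i ω) / n) 2 μ := by
    simpa only [div_eq_inv_mul] using (memLp_finsetSum _ fun i _ => hL2 i).const_mul (n : ℝ)⁻¹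
  have hmeanA : μ[fun ω => (∑ i, Y i ω) / n] = m := by
    rw [integral_div, integral_finsetSum _ fun i _ => (hL2 i).integrable one_le_two]
    simp only [hmean, Finset.sum_const, Finset.card_univ, Fintype.card_fin, nsmul_eq_mul]
    field_simp
  have hvarA : Var[fun ω => (∑ i, Y i ω) / n; μ] ≤ v / n := by
    have hsum := variance_sum_le_of_pairwise_indepFun hL2 hindep hvar
    rw [Fintype.card_fin] at hsum
    simp_rw [div_eq_inv_mul, variance_const_mul]
    calc (n : ℝ)⁻¹ ^ 2 * Var[fun ω => ∑ i, Y i ω; μ] ≤ (n : ℝ)⁻¹ ^ 2 * (n * v) := by gcongr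
      _ = (n : ℝ)⁻¹ * v := by field_simp
  calc μ {ω | ε ≤ dist ((∑ i, Y i ω) / n) m}
      ≤ ENNReal.ofReal (Var[fun ω => (∑ i, Y i ω) / n; μ] / ε ^ 2) := by
        simpa only [hmeanA, Real.dist_eq] using meas_ge_le_variance_div_sq hL2A hε
    _ ≤ ENNReal.ofReal (v / (n * ε ^ 2)) := by
        rw [← div_div]
        gcongr

theorem tendstoInMeasure_average_of_pairwise_indepFun [IsFiniteMeasure μ]
    {Y : (n : ℕ) → Fin n → Ω → ℝ} {m v : ℝ} (hL2 : ∀ n i, MemLp (Y n i) 2 μ)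
    (hindep : ∀ n, Pairwise fun i j => IndepFun (Y n i) (Y n j) μ)
    (hmean : ∀ n i, μ[Y n i] = m) (hvar : ∀ n i, Var[Y n i; μ] ≤ v) :
    TendstoInMeasure μ (fun n ω => (∑ i, Y n i ω) / n) atTop fun _ => m := by
  rw [tendstoInMeasure_iff_dist]
  intro ε hε
  have hbound : Tendsto (fun n : ℕ => ENNReal.ofReal (v / (n * ε ^ 2))) atTop (𝓝 0) := by
    rw [← ENNReal.ofReal_zero]
    refine ENNReal.tendsto_ofReal (tendsto_const_nhds.div_atTop ?_)
    exact tendsto_natCast_atTop_atTop.atTop_mul_const (by positivity)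
  refine tendsto_of_tendsto_of_tendsto_of_le_of_le' tendsto_const_nhds hbound
    (Eventually.of_forall fun _ => zero_le) ?_
  filter_upwards [eventually_ne_atTop 0] with n hn
  exact measure_dist_average_ge_le hn hε (hL2 n) (hindep n) (hmean n) (hvar n)

variable {W : Ω → ℝ}

theorem HasLaw.memLp_of_gaussianReal {m : ℝ} {v : ℝ≥0} (hW : HasLaw W (gaussianReal m v) μ)
    (p : ℝ≥0) : MemLp W p μ :=
  (memLp_map_measure_iff aestronglyMeasurable_id hW.aemeasurable).mp
    (hW.map_eq ▸ memLp_id_gaussianReal p)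

theorem HasLaw.variance_fun_comp {𝓧 : Type*} [MeasurableSpace 𝓧] {X : Ω → 𝓧} {ν : Measure 𝓧}
    (hX : HasLaw X ν μ) {f : 𝓧 → ℝ} (hf : AEMeasurable f ν) :
    Var[fun ω => f (X ω); μ] = Var[f; ν] := by
  rw [← hX.map_eq, variance_map (hX.map_eq ▸ hf) hX.aemeasurable]
  rfl

theorem HasLaw.integral_sq_of_gaussianReal [IsProbabilityMeasure μ] {m : ℝ} {v : ℝ≥0}
    (hW : HasLaw W (gaussianReal m v) μ) : μ[fun ω => W ω ^ 2] = m ^ 2 + v := by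
  have hvar := variance_eq_sub (hW.memLp_of_gaussianReal 2)
  rw [hW.variance_eq, variance_id_gaussianReal, hW.integral_eq, integral_id_gaussianReal] at hvar
  rw [hvar]
  simp

end ProbabilityTheory

theorem sampleVar_const_add_mul (n : ℕ) (a c : ℝ) (w : Fin n → ℝ) :
    sampleVar n (fun i => a + c * w i) = c ^ 2 * sampleVar n w := by
  rcases Nat.eq_zero_or_pos n with rfl | hn
  · simp [sampleVar]
  have hmean : (∑ j, (a + c * w j)) / n = a + c * ((∑ j, w j) / n) := by
    rw [Finset.sum_add_distrib, ← Finset.mul_sum]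
    simp only [Finset.sum_const, Finset.card_univ, Fintype.card_fin, nsmul_eq_mul]
    field_simp
  simp only [sampleVar, hmean, Finset.mul_sum]
  congr 1 with i
  ring

-- Valid for every `n`: for `n ≤ 1` both sides vanish by the convention `x / 0 = 0`.
theorem sampleVar_eq_mul_sub (n : ℕ) (w : Fin n → ℝ) :
    sampleVar n w = n / (n - 1) * ((∑ i, w i ^ 2) / n - ((∑ i, w i) / n) ^ 2) := by
  rcases Nat.eq_zero_or_pos n with rfl | hn
  · simp [sampleVar]
  have hn' : (n : ℝ) ≠ 0 := by positivity
  have hss : ∑ i, (w i - (∑ j, w j) / n) ^ 2 = ∑ i, w i ^ 2 - (∑ i, w i) ^ 2 / n := by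
    simp only [sub_sq, Finset.sum_add_distrib, Finset.sum_sub_distrib, ← Finset.sum_mul,
      ← Finset.mul_sum, Finset.sum_const, Finset.card_univ, Fintype.card_fin, nsmul_eq_mul]
    field_simp
    ring
  rw [sampleVar, hss]
  field_simp

theorem sub_mul_ite_lt_eq_max (s : ℝ) : (1 - s) * (if s < 1 then 1 else 0) = max (1 - s) 0 := by
  split_ifs with h
  · rw [mul_one, max_eq_left (by linarith)]
  · rw [mul_zero, max_eq_right (by linarith)]

theorem tendstoInMeasure_sampleVar_of_gaussianReal {Ω : Type*} [MeasurableSpace Ω]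
    {μ : Measure Ω} [IsProbabilityMeasure μ] {W : (n : ℕ) → Fin n → Ω → ℝ} {m : ℝ} {v : ℝ≥0}
    (hindep : ∀ n, Pairwise fun i j => IndepFun (W n i) (W n j) μ)
    (hlaw : ∀ n i, HasLaw (W n i) (gaussianReal m v) μ) :
    TendstoInMeasure μ (fun n ω => sampleVar n fun i => W n i ω) atTop fun _ => (v : ℝ) := by
  have hmean : TendstoInMeasure μ (fun n ω => (∑ i, W n i ω) / n) atTop fun _ => m :=
    tendstoInMeasure_average_of_pairwise_indepFun (fun n i => (hlaw n i).memLp_of_gaussianReal 2)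
      hindep (fun n i => (hlaw n i).integral_eq.trans integral_id_gaussianReal)
      (fun n i => ((hlaw n i).variance_eq.trans variance_id_gaussianReal).le)
  have hmeanSq : TendstoInMeasure μ (fun n ω => (∑ i, W n i ω ^ 2) / n) atTop
      fun _ => m ^ 2 + v :=
    tendstoInMeasure_average_of_pairwise_indepFun
      (fun n i => ((hlaw n i).memLp_of_gaussianReal 4).sq_of_memLp_four)
      (fun n i j hij => (hindep n hij).comp (measurable_id.pow_const 2) (measurable_id.pow_const 2))
      (fun n i => (hlaw n i).integral_sq_of_gaussianReal)
      (fun n i => ((hlaw n i).variance_fun_comp (f := fun x => x ^ 2) (by fun_prop)).le)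
  have hratio : TendstoInMeasure μ (fun (n : ℕ) (_ : Ω) => (n : ℝ) / (n - 1)) atTop
      fun _ => 1 := by
    refine tendstoInMeasure_const_of_tendsto ?_
    simpa only [sub_eq_add_neg] using tendsto_natCast_div_add_atTop (-1 : ℝ)
  have hcont : Continuous fun p : ℝ × ℝ × ℝ => p.1 * (p.2.1 - p.2.2 ^ 2) := by fun_prop
  have hlim := (hratio.prodMk (E := ℝ) (F := ℝ × ℝ) (hmeanSq.prodMk hmean)).comp_continuousAt_const
    hcont.continuousAt
  refine hlim.congr (fun n => ae_of_all _ fun ω => ?_) (ae_of_all _ fun _ => ?_)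
  · exact (sampleVar_eq_mul_sub n _).symm
  · simp

/-- Consistency of the truncated estimator `ρ̂ = (1 - s_n²)·I(s_n² < 1)`. -/
theorem stmt7 {Ω : Type*} [MeasureSpace Ω] [IsProbabilityMeasure (ℙ : Measure Ω)]
    (ρ : ℝ) (hρ0 : 0 < ρ) (hρ1 : ρ < 1)
    (X : (n : ℕ) → Fin n → Ω → ℝ) (hX : ∀ n, IsEquicorrGaussian n ρ (X n)) :
    TendstoInMeasure ℙ
      (fun n ω => (1 - sampleVar n (fun i => X n i ω)) *
        (if sampleVar n (fun i => X n i ω) < 1 then (1 : ℝ) else 0))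
      atTop (fun _ => ρ) := by
  choose Z hindep hmap hmeas hrepr using hX
  have hW := tendstoInMeasure_sampleVar_of_gaussianReal (W := fun n (i : Fin n) => Z n (i + 1))
    (fun n i j hij => (hindep n).indepFun (by simpa [Fin.val_inj] using hij))
    (fun n i => ⟨(hmeas n _).aemeasurable, hmap n _⟩)
  have hlim := hW.comp_continuousAt_const (φ := fun s => max (1 - (1 - ρ) * s) 0)
    (by fun_prop)
  refine hlim.congr (fun n => ae_of_all _ fun ω => ?_) (ae_of_all _ fun _ => ?_)
  · simp only [hrepr]
    rw [sampleVar_const_add_mul, Real.sq_sqrt (sub_nonneg.mpr hρ1.le), sub_mul_ite_lt_eq_max]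
  · simp [hρ0.le]
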